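/- arXiv:0910.5038 — 5 statements merged into one kernel-verified Lean document; each statement's English description precedes it below -/
import Mathlib

section
/- Fix integers m > n ≥ 1 and 1 ≤ i ≤ n. For every nonzero a ∈ ℝ^{m−n}, the matrix w_{L_i}(a) := x_{L_i}(a) · x_{−L_i}((2/|a|²)·a) · x_{L_i}(a) equals the (m+n)×(m+n) matrix M determined by: M_{i,i+n} = −|a|²/2, M_{i+n,i} = −2/|a|², M_{2n+ℓ,2n+k} = δ_{ℓk} − 2·a_ℓ·a_k/|a|² for 1 ≤ ℓ,k ≤ m−n, M_{k,k} = 1 for all 1 ≤ k ≤ 2n with k ∉ {i, i+n}, and all other entries of M equal to 0. -/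
/-! With `e = e_i`, `f = e_{i+n}` and `u` the vector carrying `a` in the last `m - n`
coordinates, `x_{L_i}(a) = 1 + e uᵀ - u fᵀ - (|u|²/2) e fᵀ` and `x_{-L_i}(c a)` is the same
expression with `e, f` swapped and `u` replaced by `c u`. As `e, f` are orthonormal and
orthogonal to `u`, the triple product is computed from `(x yᵀ)(z wᵀ) = (y ⬝ z) x wᵀ` alone;
for `c = 2/|u|²` it collapses to `1 - e eᵀ - f fᵀ - (|u|²/2) e fᵀ - c f eᵀ - c u uᵀ`,
which is the claimed matrix entry by entry. -/

noncomputable section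

open Matrix

/-- The `N × N` real matrix with `(k,l)` entry (1-based) equal to `1`
and all other entries `0`. -/
def Estd (N k l : ℕ) : Matrix (Fin N) (Fin N) ℝ :=
  Matrix.of fun p q => if p.val + 1 = k ∧ q.val + 1 = l then 1 else 0

/-- `f^ℓ_{L_i} = E_{i,2n+ℓ} − E_{2n+ℓ,i+n}` (1-based indices). -/
def fL (m n i ℓ : ℕ) : Matrix (Fin (m + n)) (Fin (m + n)) ℝ :=
  Estd (m + n) i (2 * n + ℓ) - Estd (m + n) (2 * n + ℓ) (i + n)

/-- `f^ℓ_{−L_i} = E_{i+n,2n+ℓ} − E_{2n+ℓ,i}` (1-based indices). -/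
def fnegL (m n i ℓ : ℕ) : Matrix (Fin (m + n)) (Fin (m + n)) ℝ :=
  Estd (m + n) (i + n) (2 * n + ℓ) - Estd (m + n) (2 * n + ℓ) i

/-- The squared Euclidean norm `|a|²` of `a ∈ ℝ^{m−n}`. -/
def sqnorm (d : ℕ) (a : Fin d → ℝ) : ℝ := ∑ ℓ, (a ℓ) ^ 2

/-- `x_{L_i}(a) = I + Σ_ℓ a_ℓ f^ℓ_{L_i} − (|a|²/2) E_{i,i+n}`. -/
def xL (m n i : ℕ) (a : Fin (m - n) → ℝ) : Matrix (Fin (m + n)) (Fin (m + n)) ℝ :=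
  1 + (∑ ℓ : Fin (m - n), a ℓ • fL m n i (ℓ.val + 1)) -
    (sqnorm (m - n) a / 2) • Estd (m + n) i (i + n)

/-- `x_{−L_i}(a) = I + Σ_ℓ a_ℓ f^ℓ_{−L_i} − (|a|²/2) E_{i+n,i}`. -/
def xnegL (m n i : ℕ) (a : Fin (m - n) → ℝ) : Matrix (Fin (m + n)) (Fin (m + n)) ℝ :=
  1 + (∑ ℓ : Fin (m - n), a ℓ • fnegL m n i (ℓ.val + 1)) -
    (sqnorm (m - n) a / 2) • Estd (m + n) (i + n) i

/-- `w_{L_i}(a) = x_{L_i}(a) · x_{−L_i}((2/|a|²)·a) · x_{L_i}(a)`. -/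
def wL (m n i : ℕ) (a : Fin (m - n) → ℝ) : Matrix (Fin (m + n)) (Fin (m + n)) ℝ :=
  xL m n i a * xnegL m n i ((2 / sqnorm (m - n) a) • a) * xL m n i a

/-- Extension of `a ∈ ℝ^{m−n}` by zero to a function on `ℕ` (0-based). -/
def ext (d : ℕ) (a : Fin d → ℝ) : ℕ → ℝ :=
  fun k => if h : k < d then a ⟨k, h⟩ else 0

section rootElement

variable {K ι : Type*} [Field K] [Fintype ι] [DecidableEq ι]

/-- When `e ⬝ f = e ⬝ u = f ⬝ u = 0` this is `exp (e uᵀ - u fᵀ)`: the nilpotent part squares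
to `-(u ⬝ u) e fᵀ` and cubes to zero. -/
def rootElement (e f u : ι → K) : Matrix ι ι K :=
  1 + vecMulVec e u - vecMulVec u f - ((u ⬝ᵥ u) / 2) • vecMulVec e f

theorem rootElement_mul_rootElement_mul_rootElement [NeZero (2 : K)] {e f u : ι → K}
    (he : e ⬝ᵥ e = 1) (hf : f ⬝ᵥ f = 1) (hef : e ⬝ᵥ f = 0)
    (heu : e ⬝ᵥ u = 0) (hfu : f ⬝ᵥ u = 0) (hu : u ⬝ᵥ u ≠ 0) :
    rootElement e f u * rootElement f e ((2 / (u ⬝ᵥ u)) • u) * rootElement e f u =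
      1 - vecMulVec e e - vecMulVec f f - ((u ⬝ᵥ u) / 2) • vecMulVec e f
        - (2 / (u ⬝ᵥ u)) • vecMulVec f e - (2 / (u ⬝ᵥ u)) • vecMulVec u u := by
  have hfe : f ⬝ᵥ e = 0 := by rw [dotProduct_comm, hef]
  have hue : u ⬝ᵥ e = 0 := by rw [dotProduct_comm, heu]
  have huf : u ⬝ᵥ f = 0 := by rw [dotProduct_comm, hfu]
  simp only [rootElement, add_mul, sub_mul, mul_add, mul_sub, one_mul, mul_one, smul_mul_assoc,
    mul_smul_comm, vecMulVec_mul_vecMulVec, smul_vecMulVec, vecMulVec_smul, smul_dotProduct,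
    dotProduct_smul, smul_smul, he, hf, hfe, heu, hfu, hue, huf, smul_eq_mul,
    one_smul, zero_smul, vecMulVec_zero, smul_zero, add_zero, sub_zero]
  match_scalars <;> field_simp <;> ring

end rootElement

lemma sqnorm_eq_dotProduct (d : ℕ) (a : Fin d → ℝ) : sqnorm d a = a ⬝ᵥ a := by
  simp only [sqnorm, dotProduct, sq]

lemma sqnorm_ne_zero {d : ℕ} {a : Fin d → ℝ} (ha : a ≠ 0) : sqnorm d a ≠ 0 := by
  rwa [sqnorm_eq_dotProduct, Ne, dotProduct_self_eq_zero]

def stdBasisVec (N j : ℕ) : Fin N → ℝ := fun p => if p.val + 1 = j then 1 else 0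

def embedVec (m n : ℕ) (a : Fin (m - n) → ℝ) : Fin (m + n) → ℝ :=
  fun p => if 2 * n ≤ p.val then ext (m - n) a (p.val - 2 * n) else 0

lemma Estd_eq_vecMulVec (N k l : ℕ) :
    Estd N k l = vecMulVec (stdBasisVec N k) (stdBasisVec N l) := by
  ext p q
  simp only [Estd, stdBasisVec, of_apply, vecMulVec_apply, ite_and, ite_mul, one_mul, zero_mul]

lemma stdBasisVec_dotProduct_stdBasisVec {N j : ℕ} (hj : 1 ≤ j) (hjN : j ≤ N) (k : ℕ) :
    stdBasisVec N j ⬝ᵥ stdBasisVec N k = if j = k then 1 else 0 := by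
  rw [dotProduct, Finset.sum_eq_single (⟨j - 1, by omega⟩ : Fin N)]
  · simp only [stdBasisVec, show j - 1 + 1 = j by omega, if_true, one_mul]
  · intro p _ hp
    rw [stdBasisVec, if_neg fun h => hp (Fin.ext (by simp; omega)), zero_mul]
  · simp

lemma stdBasisVec_dotProduct_embedVec {m n j : ℕ} (hj : j ≤ 2 * n) (a : Fin (m - n) → ℝ) :
    stdBasisVec (m + n) j ⬝ᵥ embedVec m n a = 0 := by
  refine Finset.sum_eq_zero fun p _ => ?_
  by_cases hp : p.val + 1 = j
  · simp [embedVec, show ¬ 2 * n ≤ p.val by omega]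
  · simp [stdBasisVec, hp]

lemma sum_smul_stdBasisVec_eq_embedVec (m n : ℕ) (a : Fin (m - n) → ℝ) :
    ∑ ℓ : Fin (m - n), a ℓ • stdBasisVec (m + n) (2 * n + (ℓ.val + 1)) = embedVec m n a := by
  funext p
  simp only [Finset.sum_apply, Pi.smul_apply, stdBasisVec, smul_eq_mul, mul_ite, mul_one,
    mul_zero, embedVec, _root_.ext]
  by_cases hp : 2 * n ≤ p.val ∧ p.val - 2 * n < m - n
  · rw [if_pos hp.1, dif_pos hp.2, Finset.sum_eq_single ⟨p.val - 2 * n, hp.2⟩]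
    · exact if_pos (by simp only; omega)
    · intro ℓ _ hℓ
      rw [if_neg fun h => hℓ (Fin.ext (by simp; omega))]
    · simp
  · rw [Finset.sum_eq_zero fun ℓ _ => if_neg (by omega)]
    split_ifs <;> first | rfl | omega

lemma embedVec_dotProduct_embedVec (m n : ℕ) (a : Fin (m - n) → ℝ) :
    embedVec m n a ⬝ᵥ embedVec m n a = sqnorm (m - n) a := by
  have horth (ℓ k : Fin (m - n)) : stdBasisVec (m + n) (2 * n + (ℓ.val + 1)) ⬝ᵥ
      stdBasisVec (m + n) (2 * n + (k.val + 1)) = if ℓ = k then 1 else 0 := by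
    rw [stdBasisVec_dotProduct_stdBasisVec (by omega) (by omega)]
    exact if_congr (by simp [Fin.ext_iff]) rfl rfl
  simp only [← sum_smul_stdBasisVec_eq_embedVec, sum_dotProduct, dotProduct_sum, smul_dotProduct,
    dotProduct_smul, horth, smul_eq_mul, mul_ite, mul_one, mul_zero, Finset.sum_ite_eq',
    Finset.mem_univ, if_true, sqnorm_eq_dotProduct]
  rfl

lemma embedVec_smul (m n : ℕ) (c : ℝ) (a : Fin (m - n) → ℝ) :
    embedVec m n (c • a) = c • embedVec m n a := by
  funext p
  simp only [embedVec, _root_.ext, Pi.smul_apply, smul_eq_mul]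
  split_ifs <;> simp

lemma sum_smul_sub_Estd (m n j k : ℕ) (a : Fin (m - n) → ℝ) :
    ∑ ℓ : Fin (m - n), a ℓ •
        (Estd (m + n) j (2 * n + (ℓ.val + 1)) - Estd (m + n) (2 * n + (ℓ.val + 1)) k) =
      vecMulVec (stdBasisVec (m + n) j) (embedVec m n a)
        - vecMulVec (embedVec m n a) (stdBasisVec (m + n) k) := by
  rw [← sum_smul_stdBasisVec_eq_embedVec]
  ext p q
  simp only [Estd_eq_vecMulVec, Matrix.sum_apply, Finset.sum_apply, Matrix.smul_apply,
    Matrix.sub_apply, vecMulVec_apply, Pi.smul_apply, smul_eq_mul, Finset.mul_sum,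
    Finset.sum_mul, ← Finset.sum_sub_distrib]
  exact Finset.sum_congr rfl fun ℓ _ => by ring

lemma xL_eq_rootElement (m n i : ℕ) (a : Fin (m - n) → ℝ) :
    xL m n i a = rootElement (stdBasisVec (m + n) i) (stdBasisVec (m + n) (i + n))
      (embedVec m n a) := by
  rw [xL, rootElement, embedVec_dotProduct_embedVec, ← Estd_eq_vecMulVec,
    add_sub_assoc _ (vecMulVec _ _), ← sum_smul_sub_Estd]
  rfl

lemma xnegL_eq_rootElement (m n i : ℕ) (a : Fin (m - n) → ℝ) :
    xnegL m n i a = rootElement (stdBasisVec (m + n) (i + n)) (stdBasisVec (m + n) i)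
      (embedVec m n a) := by
  rw [xnegL, rootElement, embedVec_dotProduct_embedVec, ← Estd_eq_vecMulVec,
    add_sub_assoc _ (vecMulVec _ _), ← sum_smul_sub_Estd]
  rfl

lemma of_entries_eq_one_sub_vecMulVec (m n i : ℕ) (hi1 : 1 ≤ i) (hin : i ≤ n)
    (a : Fin (m - n) → ℝ) :
    (Matrix.of (fun p q =>
        if p.val + 1 = i ∧ q.val + 1 = i + n then -(sqnorm (m - n) a) / 2
        else if p.val + 1 = i + n ∧ q.val + 1 = i then -2 / sqnorm (m - n) a
        else if 2 * n + 1 ≤ p.val + 1 ∧ 2 * n + 1 ≤ q.val + 1 then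
          (if p = q then 1 else 0) -
            2 * ext (m - n) a (p.val - 2 * n) * ext (m - n) a (q.val - 2 * n) /
              sqnorm (m - n) a
        else if p = q ∧ p.val + 1 ≤ 2 * n ∧ p.val + 1 ≠ i ∧ p.val + 1 ≠ i + n then 1
        else 0) : Matrix (Fin (m + n)) (Fin (m + n)) ℝ) =
      1 - vecMulVec (stdBasisVec (m + n) i) (stdBasisVec (m + n) i)
        - vecMulVec (stdBasisVec (m + n) (i + n)) (stdBasisVec (m + n) (i + n))
        - (sqnorm (m - n) a / 2) • vecMulVec (stdBasisVec (m + n) i) (stdBasisVec (m + n) (i + n))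
        - (2 / sqnorm (m - n) a) • vecMulVec (stdBasisVec (m + n) (i + n)) (stdBasisVec (m + n) i)
        - (2 / sqnorm (m - n) a) • vecMulVec (embedVec m n a) (embedVec m n a) := by
  ext p q
  simp only [of_apply, Matrix.sub_apply, Matrix.smul_apply, one_apply, vecMulVec_apply,
    stdBasisVec, embedVec, smul_eq_mul, Fin.ext_iff]
  split_ifs <;> first | (exfalso; omega) | ring1

theorem wL_eq_general (m n : ℕ) (hmn : n < m)
    (i : ℕ) (hi1 : 1 ≤ i) (hin : i ≤ n)
    (a : Fin (m - n) → ℝ) (ha : a ≠ 0) :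
    wL m n i a =
      Matrix.of (fun p q =>
        if p.val + 1 = i ∧ q.val + 1 = i + n then -(sqnorm (m - n) a) / 2
        else if p.val + 1 = i + n ∧ q.val + 1 = i then -2 / sqnorm (m - n) a
        else if 2 * n + 1 ≤ p.val + 1 ∧ 2 * n + 1 ≤ q.val + 1 then
          (if p = q then 1 else 0) -
            2 * ext (m - n) a (p.val - 2 * n) * ext (m - n) a (q.val - 2 * n) /
              sqnorm (m - n) a
        else if p = q ∧ p.val + 1 ≤ 2 * n ∧ p.val + 1 ≠ i ∧ p.val + 1 ≠ i + n then 1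
        else 0) := by
  have hs := embedVec_dotProduct_embedVec m n a
  rw [of_entries_eq_one_sub_vecMulVec m n i hi1 hin a, wL, xL_eq_rootElement,
    xnegL_eq_rootElement, embedVec_smul, ← hs]
  refine rootElement_mul_rootElement_mul_rootElement ?_ ?_ ?_ ?_ ?_ (hs ▸ sqnorm_ne_zero ha)
  · rw [stdBasisVec_dotProduct_stdBasisVec hi1 (by omega), if_pos rfl]
  · rw [stdBasisVec_dotProduct_stdBasisVec (by omega) (by omega), if_pos rfl]
  · rw [stdBasisVec_dotProduct_stdBasisVec hi1 (by omega), if_neg (by omega)]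
  · exact stdBasisVec_dotProduct_embedVec (by omega) a
  · exact stdBasisVec_dotProduct_embedVec (by omega) a

/-- **Explicit chain-element formula for the multi-dimensional root `L_i` of
`SO⁺(m,n)`** (Lemma 6.2 of the paper and the subsequent Remark). -/
theorem wL_eq (m n : ℕ) (hmn : n < m) (hn : 1 ≤ n)
    (i : ℕ) (hi1 : 1 ≤ i) (hin : i ≤ n)
    (a : Fin (m - n) → ℝ) (ha : a ≠ 0) :
    wL m n i a =
      Matrix.of (fun p q =>
        if p.val + 1 = i ∧ q.val + 1 = i + n then -(sqnorm (m - n) a) / 2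
        else if p.val + 1 = i + n ∧ q.val + 1 = i then -2 / sqnorm (m - n) a
        else if 2 * n + 1 ≤ p.val + 1 ∧ 2 * n + 1 ≤ q.val + 1 then
          (if p = q then 1 else 0) -
            2 * ext (m - n) a (p.val - 2 * n) * ext (m - n) a (q.val - 2 * n) /
              sqnorm (m - n) a
        else if p = q ∧ p.val + 1 ≤ 2 * n ∧ p.val + 1 ≠ i ∧ p.val + 1 ≠ i + n then 1
        else 0) :=
  wL_eq_general m n hmn i hi1 hin a ha
end
end

section
/- Let a, b, c, d ∈ ℂ² be unit vectors such that ⟨a,b⟩ = ⟨c,d⟩, where ⟨u,v⟩ = u₁·conj(v₁) + u₂·conj(v₂). Then there exist g ∈ ℂ with |g| = 1 and a 2×2 complex matrix h with hᴴ·h = I and det h = 1 (i.e. h ∈ SU(2)) such that h·a = g·c and h·b = g·d (matrix–vector multiplication and scalar multiplication of vectors). -/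
/-!
For a unit vector `v ∈ ℂ²` the matrix `frame v = [[v₀, -v̄₁], [v₁, v̄₀]]` lies in `SU(2)` and has
first column `v`. In the frame of `a` the vector `b` has coordinates `(⟨b, a⟩, a₀b₁ - a₁b₀)`, and
by the Lagrange identity the second one has modulus `√(1 - |⟨a, b⟩|²)`. So the frame coordinates
of `(a, b)` and of `(c, d)` agree up to a phase in the second coordinate, which is absorbed by
`diag(g, ḡ) ∈ SU(2)` with `g² (c₀d₁ - c₁d₀) = a₀b₁ - a₁b₀`; then
`h = frame c · diag(g, ḡ) · (frame a)ᴴ`.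
-/

open Matrix ComplexConjugate

theorem star_dotProduct_self_eq_one {ι : Type*} [Fintype ι] {v : ι → ℂ}
    (hv : ∑ i, Complex.normSq (v i) = 1) : star v ⬝ᵥ v = 1 := by
  have := congrArg ((↑) : ℝ → ℂ) hv
  push_cast [Complex.normSq_eq_conj_mul_self] at this
  exact this

def frame (v : Fin 2 → ℂ) : Matrix (Fin 2) (Fin 2) ℂ :=
  !![v 0, -star (v 1); v 1, star (v 0)]

theorem frame_conjTranspose_mulVec (v x : Fin 2 → ℂ) :
    (frame v)ᴴ *ᵥ x = ![star v ⬝ᵥ x, v 0 * x 1 - v 1 * x 0] := by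
  ext i
  fin_cases i <;>
    simp only [frame, mulVec, dotProduct, Fin.sum_univ_two, conjTranspose_apply, of_apply,
      cons_val', cons_val_zero, cons_val_one, cons_val_fin_one, Fin.zero_eta, Fin.mk_one,
      Pi.star_apply, star_neg, star_star]
  ring

theorem frame_mem_specialUnitaryGroup {v : Fin 2 → ℂ} (hv : star v ⬝ᵥ v = 1) :
    frame v ∈ specialUnitaryGroup (Fin 2) ℂ := by
  simp only [dotProduct, Fin.sum_univ_two, Pi.star_apply, Complex.star_def] at hv
  refine ⟨mem_unitaryGroup_iff'.mpr ?_, ?_⟩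
  · ext i j
    fin_cases i <;> fin_cases j <;>
      simp only [frame, Matrix.mul_apply, Fin.sum_univ_two, star_apply, of_apply, cons_val',
        cons_val_zero, cons_val_one, cons_val_fin_one, Fin.zero_eta, Fin.mk_one, one_apply_eq,
        one_apply_ne, ne_eq, zero_ne_one, one_ne_zero, not_false_eq_true, map_neg,
        Complex.star_def, Complex.conj_conj] <;>
      first | ring1 | linear_combination hv
  · show (frame v).det = 1
    rw [frame, det_fin_two_of]
    simp only [Complex.star_def]
    linear_combination hv

theorem norm_sub_mul_sq_eq_one_sub (a b : Fin 2 → ℂ) (ha : star a ⬝ᵥ a = 1)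
    (hb : star b ⬝ᵥ b = 1) : ‖a 0 * b 1 - a 1 * b 0‖ ^ 2 = 1 - ‖star a ⬝ᵥ b‖ ^ 2 := by
  apply Complex.ofReal_injective
  simp only [dotProduct, Fin.sum_univ_two, Pi.star_apply, Complex.star_def] at ha hb ⊢
  push_cast [Complex.sq_norm, Complex.normSq_eq_conj_mul_self]
  simp only [map_sub, map_add, map_mul, Complex.conj_conj]
  linear_combination (b 0 * (starRingEnd ℂ) (b 0) + b 1 * (starRingEnd ℂ) (b 1)) * ha + hb

theorem exists_norm_eq_one_mul_eq_of_norm_eq {K : Type*} [NormedDivisionRing K] {s t : K}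
    (h : ‖s‖ = ‖t‖) : ∃ u : K, ‖u‖ = 1 ∧ s = u * t := by
  rcases eq_or_ne t 0 with rfl | ht
  · exact ⟨1, norm_one, by simpa using h⟩
  · refine ⟨s * t⁻¹, ?_, (inv_mul_cancel_right₀ ht s).symm⟩
    rw [norm_mul, norm_inv, h, mul_inv_cancel₀ (norm_ne_zero_iff.mpr ht)]

theorem Complex.exists_norm_eq_one_sq_eq {u : ℂ} (hu : ‖u‖ = 1) :
    ∃ g : ℂ, ‖g‖ = 1 ∧ g ^ 2 = u := by
  obtain ⟨g, rfl⟩ := IsAlgClosed.exists_pow_nat_eq u two_pos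
  refine ⟨g, ?_, rfl⟩
  rwa [norm_pow, pow_eq_one_iff_of_nonneg (norm_nonneg g) two_ne_zero] at hu

theorem Complex.conj_mul_self_of_norm_eq_one {g : ℂ} (hg : ‖g‖ = 1) : conj g * g = 1 := by
  rw [Complex.conj_mul', hg]; norm_num

theorem diagonal_mem_specialUnitaryGroup {g : ℂ} (hg : ‖g‖ = 1) :
    diagonal ![g, star g] ∈ specialUnitaryGroup (Fin 2) ℂ := by
  have hg' := Complex.conj_mul_self_of_norm_eq_one hg
  refine ⟨mem_unitaryGroup_iff'.mpr ?_, ?_⟩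
  · rw [star_eq_conjTranspose, diagonal_conjTranspose, diagonal_mul_diagonal, ← diagonal_one]
    congr 1
    ext i
    fin_cases i <;> simp [hg', mul_comm g]
  · show (diagonal ![g, star g]).det = 1
    rw [det_diagonal, Fin.prod_univ_two]
    simpa [mul_comm g] using hg'

theorem diagonal_mulVec_eq_smul {g q s t : ℂ} (hg : ‖g‖ = 1) (hst : s = g ^ 2 * t) :
    diagonal ![g, star g] *ᵥ ![q, s] = g • ![q, t] := by
  ext i
  fin_cases i <;>
    simp only [mulVec_diagonal, Pi.smul_apply, smul_eq_mul, cons_val_zero, cons_val_one,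
      cons_val_fin_one, Fin.zero_eta, Fin.mk_one, hst, Complex.star_def]
  linear_combination g * t * Complex.conj_mul_self_of_norm_eq_one hg

theorem mul_mul_conjTranspose_mulVec {n R : Type*} [Fintype n] [DecidableEq n] [CommRing R]
    [StarRing R] {U V M : Matrix n n R} {x y : n → R} {g : R} (hV : V * Vᴴ = 1)
    (h : M *ᵥ (Uᴴ *ᵥ x) = g • (Vᴴ *ᵥ y)) : (V * M * Uᴴ) *ᵥ x = g • y := by
  rw [← mulVec_mulVec, ← mulVec_mulVec, h, mulVec_smul, mulVec_mulVec, hV, one_mulVec]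

/-- **Lemma 7.6 of the paper**: `SU(2)` acts transitively, up to a common unit
scalar, on pairs of unit vectors in `ℂ²` with prescribed Hermitian inner
product: if `⟨a,b⟩ = ⟨c,d⟩` then there are `g ∈ ℂ`, `|g| = 1`, and `h ∈ SU(2)`
with `h·a = g·c` and `h·b = g·d`. -/
theorem su2_transitive_on_pairs
    (a b c d : Fin 2 → ℂ)
    (ha : ∑ j, Complex.normSq (a j) = 1)
    (hb : ∑ j, Complex.normSq (b j) = 1)
    (hc : ∑ j, Complex.normSq (c j) = 1)
    (hd : ∑ j, Complex.normSq (d j) = 1)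
    (hinner : a 0 * star (b 0) + a 1 * star (b 1) =
      c 0 * star (d 0) + c 1 * star (d 1)) :
    ∃ (g : ℂ) (h : Matrix (Fin 2) (Fin 2) ℂ),
      ‖g‖ = 1 ∧ hᴴ * h = 1 ∧ h.det = 1 ∧
        h.mulVec a = g • c ∧ h.mulVec b = g • d := by
  replace ha := star_dotProduct_self_eq_one ha
  replace hb := star_dotProduct_self_eq_one hb
  replace hc := star_dotProduct_self_eq_one hc
  replace hd := star_dotProduct_self_eq_one hd
  have hq : star a ⬝ᵥ b = star c ⬝ᵥ d := by
    simpa [dotProduct, Fin.sum_univ_two, mul_comm] using congrArg star hinner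
  have hnorm : ‖a 0 * b 1 - a 1 * b 0‖ = ‖c 0 * d 1 - c 1 * d 0‖ := by
    rw [← sq_eq_sq₀ (norm_nonneg _) (norm_nonneg _), norm_sub_mul_sq_eq_one_sub a b ha hb,
      norm_sub_mul_sq_eq_one_sub c d hc hd, hq]
  obtain ⟨u, hu, hst⟩ := exists_norm_eq_one_mul_eq_of_norm_eq hnorm
  obtain ⟨g, hg, rfl⟩ := Complex.exists_norm_eq_one_sq_eq hu
  have hFa := frame_mem_specialUnitaryGroup ha
  have hFc := frame_mem_specialUnitaryGroup hc
  have hD := diagonal_mem_specialUnitaryGroup hg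
  have hh : frame c * diagonal ![g, star g] * (frame a)ᴴ ∈ specialUnitaryGroup (Fin 2) ℂ := by
    rw [← star_eq_conjTranspose]
    exact mul_mem (mul_mem hFc hD) (star ⟨_, hFa⟩ : specialUnitaryGroup (Fin 2) ℂ).2
  refine ⟨g, _, hg, mem_unitaryGroup_iff'.mp hh.1, hh.2, ?_, ?_⟩
  all_goals
    apply mul_mul_conjTranspose_mulVec (mem_unitaryGroup_iff.mp hFc.1)
    rw [frame_conjTranspose_mulVec, frame_conjTranspose_mulVec]
  · rw [ha, hc]
    exact diagonal_mulVec_eq_smul hg (by ring)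
  · rw [hq]
    exact diagonal_mulVec_eq_smul hg hst
end

section
/- Fix integers m > n ≥ 1, 1 ≤ i ≤ n, and let a ∈ ℂ^{m−n} be nonzero. Set X = Σ_{j=1}^{m−n} (a_j·E_{i,2n+j} − conj(a_j)·E_{2n+j,i+n}) and Y = −(2/|a|²)·Σ_{j=1}^{m−n} (a_j·E_{i+n,2n+j} − conj(a_j)·E_{2n+j,i}), and let H = X·Y − Y·X. Then H·X − X·H = 2·X and H·Y − Y·H = −2·Y; in particular X, Y, H span a real Lie subalgebra of the (m+n)×(m+n) complex matrices isomorphic to sl(2,ℝ). -/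
noncomputable section

open Matrix

/-- The `N × N` complex matrix with `(k,l)` entry (1-based) equal to `1`
and all other entries `0`. -/
def EstdC (N k l : ℕ) : Matrix (Fin N) (Fin N) ℂ :=
  Matrix.of fun p q => if p.val + 1 = k ∧ q.val + 1 = l then 1 else 0

/-- The squared Hermitian norm `|a|²` of `a ∈ ℂ^d`. -/
def hsq (d : ℕ) (a : Fin d → ℂ) : ℝ := ∑ j, Complex.normSq (a j)

/-! With `p = e_i`, `q = e_{i+n}`, `u = Σ a_j e_{2n+j}` and `v = Σ conj(a_j) e_{2n+j}` one has
`X = p uᵀ - v qᵀ` and `Y = c (q uᵀ - v pᵀ)` with `c = -2/|a|²`. Products of rank-one matrices are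
governed by dot products: `p, q` are orthonormal and orthogonal to `u, v`, and `u ⬝ v = |a|²`.
Hence `[X, Y] = 2 (p pᵀ - q qᵀ)`, and `p pᵀ - q qᵀ` acts on `X` and `Y` by `1` and `-1`. -/

namespace Matrix

section VecMulVec

variable {ι n α : Type*} [NonUnitalNonAssocSemiring α]

theorem vecMulVec_sum (x : n → α) (s : Finset ι) (y : ι → n → α) :
    vecMulVec x (∑ j ∈ s, y j) = ∑ j ∈ s, vecMulVec x (y j) := by
  ext; simp [vecMulVec_apply, Finset.mul_sum, Matrix.sum_apply]

theorem sum_vecMulVec (s : Finset ι) (y : ι → n → α) (x : n → α) :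
    vecMulVec (∑ j ∈ s, y j) x = ∑ j ∈ s, vecMulVec (y j) x := by
  ext; simp [vecMulVec_apply, Finset.sum_mul, Matrix.sum_apply]

end VecMulVec

section DotProduct

variable {ι n α : Type*} [Fintype ι] [Fintype n] [CommSemiring α]

theorem sum_smul_dotProduct_eq_zero {w : ι → n → α} {x : n → α} (h : ∀ j, w j ⬝ᵥ x = 0)
    (c : ι → α) : (∑ j, c j • w j) ⬝ᵥ x = 0 := by
  simp [sum_dotProduct, smul_dotProduct, h]

theorem dotProduct_sum_smul_eq_zero {w : ι → n → α} {x : n → α} (h : ∀ j, x ⬝ᵥ w j = 0)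
    (c : ι → α) : x ⬝ᵥ (∑ j, c j • w j) = 0 := by
  simp [dotProduct_sum, dotProduct_smul, h]

theorem sum_smul_dotProduct_sum_smul [DecidableEq ι] {w : ι → n → α}
    (hw : ∀ j k, w j ⬝ᵥ w k = if j = k then 1 else 0) (a b : ι → α) :
    (∑ j, a j • w j) ⬝ᵥ (∑ k, b k • w k) = ∑ j, a j * b j := by
  simp [sum_dotProduct, dotProduct_sum, smul_dotProduct, dotProduct_smul, hw, mul_comm (b _)]

end DotProduct

end Matrix

section Sl2Frame

variable {ι R : Type*} [Fintype ι] [CommRing R]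

structure IsSl2Frame (p q u v : ι → R) : Prop where
  dot_pp : p ⬝ᵥ p = 1
  dot_qq : q ⬝ᵥ q = 1
  dot_pq : p ⬝ᵥ q = 0
  dot_up : u ⬝ᵥ p = 0
  dot_uq : u ⬝ᵥ q = 0
  dot_pv : p ⬝ᵥ v = 0
  dot_qv : q ⬝ᵥ v = 0

def sl2X (p q u v : ι → R) : Matrix ι ι R := vecMulVec p u - vecMulVec v q

def sl2Y (p q u v : ι → R) : Matrix ι ι R := vecMulVec q u - vecMulVec v p

def sl2H (p q : ι → R) : Matrix ι ι R := vecMulVec p p - vecMulVec q q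

namespace IsSl2Frame

variable {p q u v : ι → R}

theorem commutator_sl2X_sl2Y (hf : IsSl2Frame p q u v) :
    sl2X p q u v * sl2Y p q u v - sl2Y p q u v * sl2X p q u v =
      -(u ⬝ᵥ v) • sl2H p q := by
  simp only [sl2X, sl2Y, sl2H, sub_mul, mul_sub, vecMulVec_mul_vecMulVec, hf.dot_pp,
    hf.dot_qq, hf.dot_up, hf.dot_uq, hf.dot_pv, hf.dot_qv, vecMulVec_smul, zero_smul, one_smul,
    vecMulVec_zero]
  module

theorem commutator_sl2H_sl2X (hf : IsSl2Frame p q u v) :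
    sl2H p q * sl2X p q u v - sl2X p q u v * sl2H p q = sl2X p q u v := by
  simp only [sl2X, sl2H, sub_mul, mul_sub, vecMulVec_mul_vecMulVec, hf.dot_pp,
    hf.dot_qq, hf.dot_pq, dotProduct_comm q p, hf.dot_up, hf.dot_uq, hf.dot_pv, hf.dot_qv,
    zero_smul, one_smul, vecMulVec_zero]
  abel

theorem commutator_sl2H_sl2Y (hf : IsSl2Frame p q u v) :
    sl2H p q * sl2Y p q u v - sl2Y p q u v * sl2H p q = -sl2Y p q u v := by
  simp only [sl2Y, sl2H, sub_mul, mul_sub, vecMulVec_mul_vecMulVec, hf.dot_pp,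
    hf.dot_qq, hf.dot_pq, hf.dot_up, hf.dot_uq, hf.dot_pv, hf.dot_qv,
    zero_smul, one_smul, vecMulVec_zero]
  abel

theorem sl2_triple {K : Type*} [Field K] {p q u v : ι → K} (hf : IsSl2Frame p q u v)
    (hs : u ⬝ᵥ v ≠ 0) {X Y H : Matrix ι ι K} (hX : X = sl2X p q u v)
    (hY : Y = (-(2 / (u ⬝ᵥ v))) • sl2Y p q u v) (hH : H = X * Y - Y * X) :
    H * X - X * H = (2 : K) • X ∧ H * Y - Y * H = (-2 : K) • Y := by
  have hH2 : H = (2 : K) • sl2H p q := by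
    rw [hH, hY, mul_smul_comm, smul_mul_assoc, ← smul_sub, hX, hf.commutator_sl2X_sl2Y, smul_smul]
    field_simp
  subst hX hY hH2
  constructor
  · rw [smul_mul_assoc, mul_smul_comm, ← smul_sub, hf.commutator_sl2H_sl2X]
  · calc _ = (2 * -(2 / (u ⬝ᵥ v))) • (sl2H p q * sl2Y p q u v - sl2Y p q u v * sl2H p q) := by
          simp only [smul_mul_assoc, mul_smul_comm, smul_smul]
          module
      _ = _ := by
          rw [hf.commutator_sl2H_sl2Y]
          module

end IsSl2Frame

end Sl2Frame

-- 1-based like `EstdC`; the zero vector when `k = 0` or `N < k`.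
def basisVecC (N k : ℕ) : Fin N → ℂ := fun p => if p.val + 1 = k then 1 else 0

theorem EstdC_eq_vecMulVec (N k l : ℕ) :
    EstdC N k l = vecMulVec (basisVecC N k) (basisVecC N l) := by
  ext p q
  by_cases hp : p.val + 1 = k <;> simp [EstdC, basisVecC, vecMulVec_apply, hp]

theorem basisVecC_dotProduct_self {N k : ℕ} (h1 : 1 ≤ k) (h2 : k ≤ N) :
    basisVecC N k ⬝ᵥ basisVecC N k = 1 := by
  have : basisVecC N k = Pi.single ⟨k - 1, by omega⟩ 1 := by
    ext p
    simp only [basisVecC, Pi.single_apply, Fin.ext_iff]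
    exact if_congr (by omega) rfl rfl
  simp [this]

theorem basisVecC_dotProduct_of_ne {N k l : ℕ} (h : k ≠ l) :
    basisVecC N k ⬝ᵥ basisVecC N l = 0 :=
  Finset.sum_eq_zero fun p _ => by
    simp only [basisVecC, mul_ite, mul_one, mul_zero]
    split_ifs <;> first | rfl | omega

theorem sum_mul_star_eq_hsq {d : ℕ} (a : Fin d → ℂ) : ∑ j, a j * star (a j) = hsq d a := by
  simp [hsq, Complex.mul_conj]

theorem hsq_ne_zero {d : ℕ} {a : Fin d → ℂ} (ha : a ≠ 0) : hsq d a ≠ 0 := by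
  contrapose! ha
  ext j
  simpa using (Finset.sum_eq_zero_iff_of_nonneg fun k _ => Complex.normSq_nonneg (a k)).mp ha j
    (Finset.mem_univ j)

theorem sl2_triple_su_general (m n : ℕ) (hmn : n < m)
    (i : ℕ) (hi1 : 1 ≤ i) (hin : i ≤ n)
    (a : Fin (m - n) → ℂ) (ha : a ≠ 0)
    (X Y H : Matrix (Fin (m + n)) (Fin (m + n)) ℂ)
    (hX : X = ∑ j : Fin (m - n),
      (a j • EstdC (m + n) i (2 * n + (j.val + 1)) -
        star (a j) • EstdC (m + n) (2 * n + (j.val + 1)) (i + n)))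
    (hY : Y = (-(2 / (hsq (m - n) a : ℂ))) • ∑ j : Fin (m - n),
      (a j • EstdC (m + n) (i + n) (2 * n + (j.val + 1)) -
        star (a j) • EstdC (m + n) (2 * n + (j.val + 1)) i))
    (hH : H = X * Y - Y * X) :
    H * X - X * H = (2 : ℂ) • X ∧ H * Y - Y * H = (-2 : ℂ) • Y := by
  let e := basisVecC (m + n)
  let w (j : Fin (m - n)) := e (2 * n + (j.val + 1))
  let u := ∑ j, a j • w j
  let v := ∑ j, star (a j) • w j
  have hw (j k : Fin (m - n)) : w j ⬝ᵥ w k = if j = k then 1 else 0 := by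
    split_ifs with hjk
    · exact hjk ▸ basisVecC_dotProduct_self (by omega) (by omega)
    · exact basisVecC_dotProduct_of_ne (by omega)
  have huv : u ⬝ᵥ v = hsq (m - n) a := by
    rw [sum_smul_dotProduct_sum_smul hw, sum_mul_star_eq_hsq]
  have hf : IsSl2Frame (e i) (e (i + n)) u v :=
    { dot_pp := basisVecC_dotProduct_self hi1 (by omega)
      dot_qq := basisVecC_dotProduct_self (by omega) (by omega)
      dot_pq := basisVecC_dotProduct_of_ne (by omega)
      dot_up := sum_smul_dotProduct_eq_zero (fun _ => basisVecC_dotProduct_of_ne (by omega)) _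
      dot_uq := sum_smul_dotProduct_eq_zero (fun _ => basisVecC_dotProduct_of_ne (by omega)) _
      dot_pv := dotProduct_sum_smul_eq_zero (fun _ => basisVecC_dotProduct_of_ne (by omega)) _
      dot_qv := dotProduct_sum_smul_eq_zero (fun _ => basisVecC_dotProduct_of_ne (by omega)) _ }
  refine hf.sl2_triple (huv ▸ mod_cast hsq_ne_zero ha) ?_ ?_ hH
  · simp only [hX, sl2X, u, v, EstdC_eq_vecMulVec, vecMulVec_sum, sum_vecMulVec, vecMulVec_smul,
      smul_vecMulVec, Finset.sum_sub_distrib, e, w]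
  · simp only [hY, huv, sl2Y, u, v, EstdC_eq_vecMulVec, vecMulVec_sum, sum_vecMulVec,
      vecMulVec_smul, smul_vecMulVec, Finset.sum_sub_distrib, e, w]

/-- **The `sl₂`-triple attached to the elements `x_{L_i}(0,a)` of `SU(m,n)`**
(chain lemma of Section 7.2 of the paper): setting
`X = Σ_j (a_j E_{i,2n+j} − conj(a_j) E_{2n+j,i+n})`,
`Y = −(2/|a|²) Σ_j (a_j E_{i+n,2n+j} − conj(a_j) E_{2n+j,i})` and `H = [X,Y]`,
one has `[H,X] = 2X` and `[H,Y] = −2Y`, so that `X, Y, H` span a real copy of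
`sl(2,ℝ)` inside the `(m+n)×(m+n)` complex matrices. -/
theorem sl2_triple_su (m n : ℕ) (hmn : n < m) (hn : 1 ≤ n)
    (i : ℕ) (hi1 : 1 ≤ i) (hin : i ≤ n)
    (a : Fin (m - n) → ℂ) (ha : a ≠ 0)
    (X Y H : Matrix (Fin (m + n)) (Fin (m + n)) ℂ)
    (hX : X = ∑ j : Fin (m - n),
      (a j • EstdC (m + n) i (2 * n + (j.val + 1)) -
        star (a j) • EstdC (m + n) (2 * n + (j.val + 1)) (i + n)))
    (hY : Y = (-(2 / (hsq (m - n) a : ℂ))) • ∑ j : Fin (m - n),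
      (a j • EstdC (m + n) (i + n) (2 * n + (j.val + 1)) -
        star (a j) • EstdC (m + n) (2 * n + (j.val + 1)) i))
    (hH : H = X * Y - Y * X) :
    H * X - X * H = (2 : ℂ) • X ∧ H * Y - Y * H = (-2 : ℂ) • Y :=
  sl2_triple_su_general m n hmn i hi1 hin a ha X Y H hX hY hH
end
end

section
/- Fix integers m ≥ n ≥ 2. For every nonzero t ∈ ℝ and every nonzero z ∈ ℂ, the following identity of (m+n)×(m+n) complex matrices holds: w_{2L_n}(t) · w_{L_{n−1}−L_n}(z) · w_{2L_n}(t)⁻¹ = w_{L_{n−1}+L_n}(−t·z·i). -/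
noncomputable section

open Matrix

/-- `x_{L_i−L_j}(z) = I + z·E_{i,j} − conj(z)·E_{j+n,i+n}`. -/
def xdiffC (m n i j : ℕ) (z : ℂ) : Matrix (Fin (m + n)) (Fin (m + n)) ℂ :=
  1 + z • EstdC (m + n) i j - star z • EstdC (m + n) (j + n) (i + n)

/-- `x_{L_i+L_j}(z) = I + z·E_{i,j+n} − conj(z)·E_{j,i+n}` (for `i < j`). -/
def xplusC (m n i j : ℕ) (z : ℂ) : Matrix (Fin (m + n)) (Fin (m + n)) ℂ :=
  1 + z • EstdC (m + n) i (j + n) - star z • EstdC (m + n) j (i + n)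

/-- `x_{−L_i−L_j}(z) = I + z·E_{j+n,i} − conj(z)·E_{i+n,j}` (for `i < j`). -/
def xnegplusC (m n i j : ℕ) (z : ℂ) : Matrix (Fin (m + n)) (Fin (m + n)) ℂ :=
  1 + z • EstdC (m + n) (j + n) i - star z • EstdC (m + n) (i + n) j

/-- `w_{L_i−L_j}(z) = x_{L_i−L_j}(z) x_{L_j−L_i}(−z⁻¹) x_{L_i−L_j}(z)`. -/
def wdiffC (m n i j : ℕ) (z : ℂ) : Matrix (Fin (m + n)) (Fin (m + n)) ℂ :=
  xdiffC m n i j z * xdiffC m n j i (-z⁻¹) * xdiffC m n i j z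

/-- `w_{L_i+L_j}(z) = x_{L_i+L_j}(z) x_{−L_i−L_j}(−z⁻¹) x_{L_i+L_j}(z)`. -/
def wplusC (m n i j : ℕ) (z : ℂ) : Matrix (Fin (m + n)) (Fin (m + n)) ℂ :=
  xplusC m n i j z * xnegplusC m n i j (-z⁻¹) * xplusC m n i j z

/-- `a₀ = −|a|²/2 + t·i`, for `(t,a) ∈ ℝ × ℂ^d`. -/
def azero (d : ℕ) (t : ℝ) (a : Fin d → ℂ) : ℂ :=
  ((-(hsq d a) / 2 : ℝ) : ℂ) + (t : ℂ) * Complex.I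

/-- `x_{L_i}(t,a) = I + Σ_j (a_j·E_{i,2n+j} − conj(a_j)·E_{2n+j,i+n}) + a₀·E_{i,i+n}`. -/
def xLC (m n i : ℕ) (t : ℝ) (a : Fin (m - n) → ℂ) :
    Matrix (Fin (m + n)) (Fin (m + n)) ℂ :=
  1 + (∑ j : Fin (m - n),
      (a j • EstdC (m + n) i (2 * n + (j.val + 1)) -
        star (a j) • EstdC (m + n) (2 * n + (j.val + 1)) (i + n))) +
    azero (m - n) t a • EstdC (m + n) i (i + n)

/-- `x_{−L_i}(t,a) = I + Σ_j (a_j·E_{i+n,2n+j} − conj(a_j)·E_{2n+j,i}) + a₀·E_{i+n,i}`. -/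
def xnegLC (m n i : ℕ) (t : ℝ) (a : Fin (m - n) → ℂ) :
    Matrix (Fin (m + n)) (Fin (m + n)) ℂ :=
  1 + (∑ j : Fin (m - n),
      (a j • EstdC (m + n) (i + n) (2 * n + (j.val + 1)) -
        star (a j) • EstdC (m + n) (2 * n + (j.val + 1)) i)) +
    azero (m - n) t a • EstdC (m + n) (i + n) i

/-- `w_{L_i}(t,a) = x_{L_i}(t,a) · x_{−L_i}(t/|a₀|², −a₀⁻¹a) · x_{L_i}(t, (conj a₀/a₀)a)`. -/
def wLC (m n i : ℕ) (t : ℝ) (a : Fin (m - n) → ℂ) :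
    Matrix (Fin (m + n)) (Fin (m + n)) ℂ :=
  xLC m n i t a *
    xnegLC m n i (t / Complex.normSq (azero (m - n) t a))
      ((-(azero (m - n) t a)⁻¹) • a) *
    xLC m n i t ((star (azero (m - n) t a) / azero (m - n) t a) • a)

/-- `x_{2L_n}(t) = I + t·i·E_{n,2n}`. -/
def x2L (m n : ℕ) (t : ℝ) : Matrix (Fin (m + n)) (Fin (m + n)) ℂ :=
  1 + ((t : ℂ) * Complex.I) • EstdC (m + n) n (2 * n)

/-- `x_{−2L_n}(t) = I + t·i·E_{2n,n}`. -/
def xneg2L (m n : ℕ) (t : ℝ) : Matrix (Fin (m + n)) (Fin (m + n)) ℂ :=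
  1 + ((t : ℂ) * Complex.I) • EstdC (m + n) (2 * n) n

/-- `w_{2L_n}(t) = x_{2L_n}(t) x_{−2L_n}(t⁻¹) x_{2L_n}(t)`. -/
def w2L (m n : ℕ) (t : ℝ) : Matrix (Fin (m + n)) (Fin (m + n)) ℂ :=
  x2L m n t * xneg2L m n t⁻¹ * x2L m n t

/-! `w_{2L_n}(t)` is the monomial matrix of the transposition `n ↔ 2n` with entries `t i`
and `−(t i)⁻¹`, and its inverse is the same matrix for `−t i`. Conjugation by it therefore
moves each matrix unit `E_{k,l}` to a multiple of `E_{σk,σl}`, `σ = (n 2n)`: it carries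
`x_{L_i−L_n}(y)` to `x_{L_i+L_n}(−t i y)` and `x_{L_n−L_i}(y)` to `x_{−L_i−L_n}(−(t i)⁻¹ y)`,
the conjugate-linear entries matching because `conj (t i) = −t i`. Being multiplicative,
conjugation then carries `w_{L_i−L_n}(z)` to `w_{L_i+L_n}(−t i z)`. -/

open Complex

section MatrixUnits

variable {N : ℕ}

theorem EstdC_mul_EstdC_of_ne {k l k' l' : ℕ} (h : l ≠ k') :
    EstdC N k l * EstdC N k' l' = 0 := by
  ext p q
  simp only [EstdC, mul_apply, of_apply, Matrix.zero_apply]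
  refine Finset.sum_eq_zero fun r _ => ?_
  split_ifs with h₁ h₂ <;> first | omega | simp

theorem EstdC_mul_EstdC_self {k l l' : ℕ} (hl : 1 ≤ l) (hlN : l ≤ N) :
    EstdC N k l * EstdC N l l' = EstdC N k l' := by
  ext p q
  simp only [EstdC, mul_apply, of_apply]
  rw [Finset.sum_eq_single ⟨l - 1, by omega⟩]
  · split_ifs <;> simp_all
  · intro r _ hr
    have : r.val + 1 ≠ l := fun h => hr (Fin.ext (by simp; omega))
    simp [this]
  · simp

end MatrixUnits

def swapMat (N b c : ℕ) (τ : ℂ) : Matrix (Fin N) (Fin N) ℂ :=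
  1 - EstdC N b b - EstdC N c c + τ • EstdC N b c - τ⁻¹ • EstdC N c b

section SwapMat

variable {N b c : ℕ}

theorem swapMat_mul_EstdC (hb : 1 ≤ b) (hbN : b ≤ N) (hc : 1 ≤ c) (hcN : c ≤ N) (hbc : b ≠ c)
    (τ : ℂ) (p q : ℕ) :
    swapMat N b c τ * EstdC N p q =
      if p = b then (-τ⁻¹) • EstdC N c q else if p = c then τ • EstdC N b q else EstdC N p q := by
  simp only [swapMat, add_mul, sub_mul, one_mul, smul_mul_assoc]
  split_ifs with h₁ h₂
  · subst h₁
    simp [EstdC_mul_EstdC_self hb hbN, EstdC_mul_EstdC_of_ne hbc.symm]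
  · subst h₂
    simp [EstdC_mul_EstdC_self hc hcN, EstdC_mul_EstdC_of_ne hbc]
  · simp [EstdC_mul_EstdC_of_ne (Ne.symm h₁), EstdC_mul_EstdC_of_ne (Ne.symm h₂)]

theorem EstdC_mul_swapMat (hb : 1 ≤ b) (hbN : b ≤ N) (hc : 1 ≤ c) (hcN : c ≤ N) (hbc : b ≠ c)
    (τ : ℂ) (p q : ℕ) :
    EstdC N p q * swapMat N b c τ =
      if q = b then τ • EstdC N p c else if q = c then (-τ⁻¹) • EstdC N p b else EstdC N p q := by
  simp only [swapMat, mul_add, mul_sub, mul_one, mul_smul_comm]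
  split_ifs with h₁ h₂
  · subst h₁
    simp [EstdC_mul_EstdC_self hb hbN, EstdC_mul_EstdC_of_ne hbc]
  · subst h₂
    simp [EstdC_mul_EstdC_self hc hcN, EstdC_mul_EstdC_of_ne hbc.symm]
  · simp [EstdC_mul_EstdC_of_ne h₁, EstdC_mul_EstdC_of_ne h₂]

theorem swapMat_mul_swapMat_neg (hb : 1 ≤ b) (hbN : b ≤ N) (hc : 1 ≤ c) (hcN : c ≤ N)
    (hbc : b ≠ c) {τ : ℂ} (hτ : τ ≠ 0) :
    swapMat N b c τ * swapMat N b c (-τ) = 1 := by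
  nth_rw 2 [swapMat]
  simp only [mul_add, mul_sub, mul_one, mul_smul_comm, swapMat_mul_EstdC hb hbN hc hcN hbc,
    if_neg hbc, if_neg hbc.symm, if_true]
  rw [swapMat]
  match_scalars <;> field_simp <;> ring

theorem one_add_smul_EstdC_mul_mul_eq_swapMat (hb : 1 ≤ b) (hbN : b ≤ N) (hc : 1 ≤ c)
    (hcN : c ≤ N) (hbc : b ≠ c) {τ : ℂ} (hτ : τ ≠ 0) :
    (1 + τ • EstdC N b c) * (1 + (-τ⁻¹) • EstdC N c b) * (1 + τ • EstdC N b c) =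
      swapMat N b c τ := by
  simp only [mul_add, add_mul, mul_one, one_mul, smul_mul_assoc, mul_smul_comm,
    EstdC_mul_EstdC_self hb hbN, EstdC_mul_EstdC_self hc hcN, EstdC_mul_EstdC_of_ne hbc.symm,
    smul_zero, add_zero, swapMat]
  match_scalars <;> field_simp
  ring

end SwapMat

theorem conj_mul_of_mul_eq_one {M : Type*} [Monoid M] {g g' : M} (h : g' * g = 1)
    (a b : M) : g * (a * b) * g' = g * a * g' * (g * b * g') := by
  simp only [mul_assoc]
  rw [← mul_assoc g' g, h, one_mul]

section SU

variable {m n : ℕ}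

theorem w2L_eq_swapMat (hmn : n ≤ m) (hn : 1 ≤ n) {t : ℝ} (ht : t ≠ 0) :
    w2L m n t = swapMat (m + n) n (n + n) (t * I) := by
  have hτ : (t : ℂ) * I ≠ 0 := mul_ne_zero (ofReal_ne_zero.2 ht) I_ne_zero
  have hinv : ((t⁻¹ : ℝ) : ℂ) * I = -((t : ℂ) * I)⁻¹ := by
    rw [mul_inv, inv_I]; push_cast; ring
  rw [w2L, x2L, xneg2L, hinv, two_mul]
  exact one_add_smul_EstdC_mul_mul_eq_swapMat (by omega) (by omega) (by omega) (by omega)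
    (by omega) hτ

theorem swapMat_mul_xdiffC_mul_swapMat_neg {i : ℕ} (hmn : n ≤ m) (hi : 0 < i) (hin : i < n)
    {τ : ℂ} (hτ : τ ≠ 0) (hτs : star τ = -τ) (y : ℂ) :
    swapMat (m + n) n (n + n) τ * xdiffC m n i n y * swapMat (m + n) n (n + n) (-τ) =
      xplusC m n i n (-τ * y) := by
  have h₁ : i ≠ n := by omega
  have h₂ : i ≠ n + n := by omega
  have h₃ : n + n ≠ n := by omega
  have h₄ : i + n ≠ n := by omega
  have h₅ : i + n ≠ n + n := by omega
  have hL := swapMat_mul_EstdC (N := m + n) (by omega) (by omega) (by omega) (by omega) h₃.symm τ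
  have hR := EstdC_mul_swapMat (N := m + n) (by omega) (by omega) (by omega) (by omega) h₃.symm (-τ)
  have hW := swapMat_mul_swapMat_neg (N := m + n) (by omega) (by omega) (by omega) (by omega)
    h₃.symm hτ
  simp only [xdiffC, mul_add, add_mul, mul_sub, sub_mul, mul_one, smul_mul_assoc, mul_smul_comm,
    hL, hR, hW, h₁, h₂, h₃, h₄, h₅, if_true, if_false]
  rw [xplusC, star_mul', star_neg, hτs]
  match_scalars <;> ring

theorem swapMat_mul_xdiffC_rev_mul_swapMat_neg {i : ℕ} (hmn : n ≤ m) (hi : 0 < i) (hin : i < n)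
    {τ : ℂ} (hτ : τ ≠ 0) (hτs : star τ = -τ) (y : ℂ) :
    swapMat (m + n) n (n + n) τ * xdiffC m n n i y * swapMat (m + n) n (n + n) (-τ) =
      xnegplusC m n i n (-τ⁻¹ * y) := by
  have h₁ : i ≠ n := by omega
  have h₂ : i ≠ n + n := by omega
  have h₃ : n + n ≠ n := by omega
  have h₄ : i + n ≠ n := by omega
  have h₅ : i + n ≠ n + n := by omega
  have hL := swapMat_mul_EstdC (N := m + n) (by omega) (by omega) (by omega) (by omega) h₃.symm τ
  have hR := EstdC_mul_swapMat (N := m + n) (by omega) (by omega) (by omega) (by omega) h₃.symm (-τ)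
  have hW := swapMat_mul_swapMat_neg (N := m + n) (by omega) (by omega) (by omega) (by omega)
    h₃.symm hτ
  simp only [xdiffC, mul_add, add_mul, mul_sub, sub_mul, mul_one, smul_mul_assoc, mul_smul_comm,
    hL, hR, hW, h₁, h₂, h₃, h₄, h₅, if_true, if_false]
  rw [xnegplusC, star_mul', star_neg, star_inv₀, hτs]
  match_scalars <;> field_simp

theorem w2L_conj_wdiffC_of_lt {i : ℕ} (hmn : n ≤ m) (hi : 0 < i) (hin : i < n) {t : ℝ}
    (ht : t ≠ 0) (z : ℂ) :
    w2L m n t * wdiffC m n i n z * (w2L m n t)⁻¹ = wplusC m n i n (-(t * I) * z) := by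
  have hτ : (t : ℂ) * I ≠ 0 := mul_ne_zero (ofReal_ne_zero.2 ht) I_ne_zero
  have hτs : star ((t : ℂ) * I) = -(t * I) := by simp
  have hW' : swapMat (m + n) n (n + n) (t * I) * swapMat (m + n) n (n + n) (-(t * I)) = 1 :=
    swapMat_mul_swapMat_neg (by omega) (by omega) (by omega) (by omega) (by omega) hτ
  rw [w2L_eq_swapMat hmn (by omega) ht, inv_eq_right_inv hW', wdiffC,
    conj_mul_of_mul_eq_one (mul_eq_one_comm.1 hW'),
    conj_mul_of_mul_eq_one (mul_eq_one_comm.1 hW'),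
    swapMat_mul_xdiffC_mul_swapMat_neg hmn hi hin hτ hτs,
    swapMat_mul_xdiffC_rev_mul_swapMat_neg hmn hi hin hτ hτs, wplusC]
  congr 3
  ring

end SU

theorem w2L_conj_wdiffC_general (m n : ℕ) (hmn : n ≤ m) (hn : 2 ≤ n)
    (t : ℝ) (ht : t ≠ 0) (z : ℂ) :
    w2L m n t * wdiffC m n (n - 1) n z * (w2L m n t)⁻¹ =
      wplusC m n (n - 1) n (-((t : ℂ) * z * Complex.I)) := by
  rw [w2L_conj_wdiffC_of_lt hmn (by omega) (by omega) ht]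
  congr 1
  ring

/-- **Item 6 of Lemma 7.5 of the paper, in `SU(m,n)`**:
`w_{2L_n}(t) · w_{L_{n−1}−L_n}(z) · w_{2L_n}(t)⁻¹ = w_{L_{n−1}+L_n}(−t·z·i)`. -/
theorem w2L_conj_wdiffC (m n : ℕ) (hmn : n ≤ m) (hn : 2 ≤ n)
    (t : ℝ) (ht : t ≠ 0) (z : ℂ) (hz : z ≠ 0) :
    w2L m n t * wdiffC m n (n - 1) n z * (w2L m n t)⁻¹ =
      wplusC m n (n - 1) n (-((t : ℂ) * z * Complex.I)) :=
  w2L_conj_wdiffC_general m n hmn hn t ht z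
end
end

section
/- For every (α,β) ∈ ℂ² with |α|² + |β|² = 1, there exist v ∈ ℝ and u ∈ ℂ with v² + |u|² = 1 such that v·α − u·conj(β) is real and conj(u)·α + v·conj(β) is purely imaginary (i.e. has real part 0). -/
/-! Both conditions are real-linear in `(v, u) ∈ ℝ × ℂ ≅ ℝ³`, so they cut out the kernel of a
linear map `ℝ³ → ℝ²`, which is nonzero by counting dimensions. Rescaling a nonzero element
of the kernel gives `v² + |u|² = 1`. -/

open Module Complex

def su2NormalFormMap (α β : ℂ) : ℝ × ℂ →ₗ[ℝ] ℝ × ℝ where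
  toFun x := (((x.1 : ℂ) * α - x.2 * star β).im, (star x.2 * α + (x.1 : ℂ) * star β).re)
  map_add' x y := by ext <;> simp <;> ring
  map_smul' c x := by ext <;> simp [real_smul] <;> ring

theorem su2NormalFormMap_ker_ne_bot (α β : ℂ) : LinearMap.ker (su2NormalFormMap α β) ≠ ⊥ :=
  LinearMap.ker_ne_bot_of_finrank_lt <| by
    simp [finrank_prod, finrank_real_complex]

theorem Submodule.exists_sq_add_normSq_eq_one_mem {K : Submodule ℝ (ℝ × ℂ)} (hK : K ≠ ⊥) :
    ∃ x ∈ K, x.1 ^ 2 + normSq x.2 = 1 := by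
  obtain ⟨x, hxK, hx⟩ := (Submodule.ne_bot_iff K).mp hK
  have hpos : 0 < x.1 ^ 2 + normSq x.2 := by
    by_contra! hle
    have h₁ : x.1 ^ 2 = 0 := by linarith [sq_nonneg x.1, normSq_nonneg x.2]
    have h₂ : normSq x.2 = 0 := by linarith [sq_nonneg x.1, normSq_nonneg x.2]
    exact hx (Prod.ext (pow_eq_zero_iff two_ne_zero |>.mp h₁) (normSq_eq_zero.mp h₂))
  refine ⟨(√(x.1 ^ 2 + normSq x.2))⁻¹ • x, K.smul_mem _ hxK, ?_⟩
  simp only [Prod.smul_fst, Prod.smul_snd, smul_eq_mul, real_smul, normSq_mul,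
    normSq_ofReal]
  field_simp
  rw [Real.sq_sqrt hpos.le]

theorem su2_normal_form_general (α β : ℂ) :
    ∃ (v : ℝ) (u : ℂ), v ^ 2 + Complex.normSq u = 1 ∧
      ((v : ℂ) * α - u * star β).im = 0 ∧
      (star u * α + (v : ℂ) * star β).re = 0 := by
  obtain ⟨⟨v, u⟩, hker, hunit⟩ :=
    Submodule.exists_sq_add_normSq_eq_one_mem (su2NormalFormMap_ker_ne_bot α β)
  obtain ⟨him, hre⟩ := Prod.mk_eq_zero.mp (LinearMap.mem_ker.mp hker)
  exact ⟨v, u, hunit, him, hre⟩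

/-- **The normal-form claim in the proof of Lemma 7.17 of the paper**: for every
`(α,β) ∈ ℂ²` with `|α|² + |β|² = 1` there exist `v ∈ ℝ` and `u ∈ ℂ` with
`v² + |u|² = 1` such that `v·α − u·conj(β)` is real and
`conj(u)·α + v·conj(β)` is purely imaginary. Equivalently, the `SU(2)` matrix
`R = [[v, u], [conj u, −v]]` maps the vector `(α, −conj β)` into `ℝ × ℝi`. -/
theorem su2_normal_form (α β : ℂ)
    (h : Complex.normSq α + Complex.normSq β = 1) :
    ∃ (v : ℝ) (u : ℂ), v ^ 2 + Complex.normSq u = 1 ∧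
      ((v : ℂ) * α - u * star β).im = 0 ∧
      (star u * α + (v : ℂ) * star β).re = 0 :=
  su2_normal_form_general α β
end
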